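/- Let h be a positive integer, let φ(x_1,…,x_h) = c_1x_1 + ⋯ + c_hx_h be a linear form with integer coefficients satisfying condition N, and set C = Σ_{i=1}^h |c_i|. Let A be a finite φ-Sidon set of positive integers and let b be an integer with b > C · max(A). Then A ∪ {b} is a φ-Sidon set. -/

import Mathlib

/-- `A` is a Sidon set for the linear form `φ(x₁,…,x_h) = c₁x₁ + ⋯ + c_hx_h`
with integer coefficients `c`. -/
def IsSidon {h : ℕ} (c : Fin h → ℤ) (A : Set ℤ) : Prop :=
  ∀ a a' : Fin h → ℤ, (∀ i, a i ∈ A) → (∀ i, a' i ∈ A) →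
    (∑ i, c i * a i) = (∑ i, c i * a' i) → a = a'

/-- The linear form with coefficients `c` satisfies condition N. -/
def ConditionN {h : ℕ} (c : Fin h → ℤ) : Prop :=
  ¬ ∃ I₁ I₂ : Finset (Fin h), Disjoint I₁ I₂ ∧ (I₁.Nonempty ∨ I₂.Nonempty) ∧
      ∑ i ∈ I₁, c i = ∑ i ∈ I₂, c i

/-!
Write a tuple `a` over `A ∪ {b}` as `b` on the set `I` of positions where it equals `b`, and an
entry of `A` elsewhere. Putting `0` on `I` instead gives a tuple `r` with entries in `[0, max A]`,
and `φ(a) = b · ∑_{i ∈ I} cᵢ + φ(r)`. For two tuples with `φ(a) = φ(a')` the difference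
`φ(r) - φ(r')` is a multiple of `b` of absolute value at most `C · max A < b`, so it vanishes and
`∑_I c = ∑_{I'} c`; condition N then forces `I = I'`. Putting an element of `A` on `I` instead of
`b` reduces `a = a'` to the Sidon property of `A`.
-/

open Finset

lemma sum_mul_ite {ι R : Type*} [Fintype ι] [CommRing R] (c y : ι → R) (p : ι → Prop)
    [DecidablePred p] (x : R) :
    ∑ i, c i * (if p i then x else y i) =
      (∑ i with p i, c i) * x + ∑ i, c i * (if p i then 0 else y i) := by
  rw [sum_filter, sum_mul, ← sum_add_distrib]
  refine sum_congr rfl fun i _ => ?_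
  split_ifs <;> ring

lemma abs_sum_mul_sub_sum_mul_le {ι R : Type*} [Fintype ι] [CommRing R] [LinearOrder R]
    [IsStrictOrderedRing R] (c : ι → R) {f g : ι → R} {m : R} (hf : ∀ i, f i ∈ Set.Icc 0 m)
    (hg : ∀ i, g i ∈ Set.Icc 0 m) :
    |∑ i, c i * f i - ∑ i, c i * g i| ≤ (∑ i, |c i|) * m := by
  rw [← sum_sub_distrib, sum_mul]
  refine (abs_sum_le_sum_abs _ _).trans (sum_le_sum fun i _ => ?_)
  rw [← mul_sub, abs_mul]
  exact mul_le_mul_of_nonneg_left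
    (abs_sub_le_of_nonneg_of_le (hf i).1 (hf i).2 (hg i).1 (hg i).2) (abs_nonneg _)

lemma Int.eq_of_mul_add_eq_mul_add {b s s' t t' : ℤ} (h : s * b + t = s' * b + t')
    (ht : |t - t'| < b) : s = s' ∧ t = t' := by
  have htt' : t - t' = 0 := Int.eq_zero_of_abs_lt_dvd ⟨s' - s, by linarith⟩ ht
  have hb : b ≠ 0 := ((abs_nonneg _).trans_lt ht).ne'
  exact ⟨mul_right_cancel₀ hb (by linarith), by linarith⟩

lemma ConditionN.eq_of_sum_eq {h : ℕ} {c : Fin h → ℤ} (hN : ConditionN c)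
    {I J : Finset (Fin h)} (hIJ : ∑ i ∈ I, c i = ∑ i ∈ J, c i) : I = J := by
  by_contra hne
  refine hN ⟨I \ J, J \ I, disjoint_sdiff_sdiff, ?_, ?_⟩
  · by_contra! hempty
    simp only [sdiff_eq_empty_iff_subset] at hempty
    exact hne (hempty.1.antisymm hempty.2)
  · have hI := sum_inter_add_sum_sdiff I J c
    have hJ := sum_inter_add_sum_sdiff J I c
    rw [inter_comm] at hI
    linarith

theorem IsSidon.insert_of_lt {h : ℕ} {c : Fin h → ℤ} (hN : ConditionN c) {A : Set ℤ}
    (hA : IsSidon c A) {a₀ m b : ℤ} (ha₀ : a₀ ∈ A) (hAm : A ⊆ Set.Icc 0 m)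
    (hb : (∑ i, |c i|) * m < b) : IsSidon c (insert b A) := by
  classical
  intro a a' ha ha' hsum
  let subst (a : Fin h → ℤ) (x : ℤ) (i : Fin h) : ℤ := if a i = b then x else a i
  have sum_subst (a : Fin h → ℤ) (x : ℤ) : ∑ i, c i * subst a x i =
      (∑ i with a i = b, c i) * x + ∑ i, c i * subst a 0 i := sum_mul_ite c a _ x
  have subst_self (a : Fin h → ℤ) : subst a b = a := by
    funext i; by_cases hi : a i = b <;> simp [subst, hi]
  have mem_of_ne {a : Fin h → ℤ} (ha : ∀ i, a i ∈ insert b A) {i} (hi : a i ≠ b) : a i ∈ A :=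
    (ha i).resolve_left hi
  have subst_zero_mem {a : Fin h → ℤ} (ha : ∀ i, a i ∈ insert b A) (i) :
      subst a 0 i ∈ Set.Icc 0 m := by
    by_cases hi : a i = b
    · simpa [subst, hi] using (hAm ha₀).1.trans (hAm ha₀).2
    · simpa [subst, hi] using hAm (mem_of_ne ha hi)
  have subst_a₀_mem {a : Fin h → ℤ} (ha : ∀ i, a i ∈ insert b A) (i) : subst a a₀ i ∈ A := by
    by_cases hi : a i = b
    · simpa [subst, hi] using ha₀
    · simpa [subst, hi] using mem_of_ne ha hi
  obtain ⟨hS, hT⟩ := Int.eq_of_mul_add_eq_mul_add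
    (by rw [← sum_subst, ← sum_subst, subst_self, subst_self, hsum])
    ((abs_sum_mul_sub_sum_mul_le c (subst_zero_mem ha) (subst_zero_mem ha')).trans_lt hb)
  have hI := hN.eq_of_sum_eq hS
  have hg : subst a a₀ = subst a' a₀ := hA _ _ (subst_a₀_mem ha) (subst_a₀_mem ha')
    (by rw [sum_subst a a₀, sum_subst a' a₀, hS, hT])
  funext i
  have hi : a i = b ↔ a' i = b := by simpa using congrArg (i ∈ ·) hI
  by_cases hab : a i = b
  · rw [hab, hi.1 hab]
  · simpa [subst, hab, hi.not.1 hab] using congrFun hg i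

theorem statement12_general {h : ℕ} (c : Fin h → ℤ) (hN : ConditionN c)
    (A : Finset ℤ) (hA : A.Nonempty) (hpos : ∀ a ∈ A, 0 < a)
    (hSidon : IsSidon c (A : Set ℤ))
    (b : ℤ) (hb : b > (∑ i, |c i|) * A.max' hA) :
    IsSidon c (insert b (A : Set ℤ)) :=
  hSidon.insert_of_lt hN (A.max'_mem hA)
    (fun a ha => ⟨(hpos a ha).le, A.le_max' a ha⟩) hb

/-- If `A` is a finite φ-Sidon set of positive integers and `b > C · max A`
with `C = Σ|cᵢ|`, then `A ∪ {b}` is a φ-Sidon set. -/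
theorem statement12 {h : ℕ} (hh : 0 < h) (c : Fin h → ℤ) (hN : ConditionN c)
    (A : Finset ℤ) (hA : A.Nonempty) (hpos : ∀ a ∈ A, 0 < a)
    (hSidon : IsSidon c (A : Set ℤ))
    (b : ℤ) (hb : b > (∑ i, |c i|) * A.max' hA) :
    IsSidon c (insert b (A : Set ℤ)) :=
  statement12_general c hN A hA hpos hSidon b hb
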